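/- Let q ≥ 3, 0 ≤ j ≤ n, and let f: Σ_q^n → ℝ be a nonzero function in U_{[0,j]}(n,q) (a sum of eigenfunctions of H(n,q) for eigenvalues n(q-1)-q·t with 0 ≤ t ≤ j). Then the support of f has cardinality at least q^{n-j}. -/
import Mathlib

/-- Sum of `f` over the neighbors of `x` in the Hamming graph `H(n,q)`. -/
noncomputable def adjSum (n q : ℕ) (f : (Fin n → Fin q) → ℝ) (x : Fin n → Fin q) : ℝ :=
  ∑ y : Fin n → Fin q, if hammingDist x y = 1 then f y else 0

/-- `f` satisfies the eigenfunction equation for eigenvalue `lam` on `H(n,q)`. -/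
def IsEigenfun (n q : ℕ) (lam : ℝ) (f : (Fin n → Fin q) → ℝ) : Prop :=
  ∀ x, adjSum n q f x = lam * f x

/-- `f ∈ U_i(n,q)`, the eigenspace for eigenvalue `n(q-1) - q i`. -/
def memU (n q i : ℕ) (f : (Fin n → Fin q) → ℝ) : Prop :=
  IsEigenfun n q ((n : ℝ) * ((q : ℝ) - 1) - (q : ℝ) * (i : ℝ)) f

/-- `f ∈ U_{[i,j]}(n,q) = U_i ⊕ ⋯ ⊕ U_j`. -/
def memUI (n q i j : ℕ) (f : (Fin n → Fin q) → ℝ) : Prop :=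
  ∃ g : ℕ → (Fin n → Fin q) → ℝ,
    (∀ t ∈ Finset.Icc i j, memU n q t (g t)) ∧ f = ∑ t ∈ Finset.Icc i j, g t

/-- The cardinality of the support of `f : Σ_q^n → ℝ`. -/
noncomputable def suppCard (n q : ℕ) (f : (Fin n → Fin q) → ℝ) : ℕ :=
  Nat.card {x : Fin n → Fin q // f x ≠ 0}

open Finset

lemma hamming_cons {m q : ℕ} (a b : Fin q) (x y : Fin m → Fin q) :
    hammingDist (Fin.cons a x : Fin (m+1) → Fin q) (Fin.cons b y) = (if a = b then 0 else 1) + hammingDist x y := by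
  classical
  simp only [hammingDist, Finset.card_filter]
  rw [Fin.sum_univ_succ]
  simp [Fin.cons_succ, Fin.cons_zero]

lemma sum_pi_succ {m q : ℕ} {M : Type*} [AddCommMonoid M] (g : (Fin (m+1) → Fin q) → M) :
    ∑ x : Fin (m+1) → Fin q, g x = ∑ a : Fin q, ∑ y : Fin m → Fin q, g (Fin.cons a y) := by
  calc ∑ x : Fin (m+1) → Fin q, g x
      = ∑ p : Fin q × (Fin m → Fin q), g (Fin.consEquiv (fun _ => Fin q) p) :=
        (Equiv.sum_comp _ g).symm
    _ = ∑ a : Fin q, ∑ y : Fin m → Fin q, g (Fin.cons a y) := by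
        rw [Fintype.sum_prod_type]; rfl

lemma adjSum_cons {m q : ℕ} (f : (Fin (m+1) → Fin q) → ℝ) (a : Fin q) (y : Fin m → Fin q) :
    adjSum (m+1) q f (Fin.cons a y)
      = adjSum m q (fun z => f (Fin.cons a z)) y
        + ((∑ b : Fin q, f (Fin.cons b y)) - f (Fin.cons a y)) := by
  classical
  rw [adjSum, sum_pi_succ]
  have key : ∀ b : Fin q,
      (∑ z : Fin m → Fin q,
        if hammingDist (Fin.cons a y : Fin (m+1) → Fin q) (Fin.cons b z) = 1 then f (Fin.cons b z) else 0)
      = (if a = b then adjSum m q (fun z => f (Fin.cons a z)) y - f (Fin.cons a y) else 0)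
        + f (Fin.cons b y) := by
    intro b
    by_cases hab : a = b
    · subst hab
      simp only [if_pos rfl]
      have h1 : ∀ z : Fin m → Fin q,
          (if hammingDist (Fin.cons a y : Fin (m+1) → Fin q) (Fin.cons a z) = 1 then f (Fin.cons a z) else 0)
          = (if hammingDist y z = 1 then f (Fin.cons a z) else 0) := by
        intro z; rw [hamming_cons]; simp
      rw [Finset.sum_congr rfl (fun z _ => h1 z), adjSum]
      simp only [if_true]
      ring
    · simp only [if_neg hab]
      have h1 : ∀ z : Fin m → Fin q,
          (if hammingDist (Fin.cons a y : Fin (m+1) → Fin q) (Fin.cons b z) = 1 then f (Fin.cons b z) else 0)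
          = (if z = y then f (Fin.cons b z) else 0) := by
        intro z; rw [hamming_cons, if_neg hab]
        congr 1
        simp only [eq_iff_iff]
        constructor
        · intro h
          have : hammingDist y z = 0 := by omega
          exact (hammingDist_eq_zero.mp this).symm
        · intro h; subst h; simp
      rw [Finset.sum_congr rfl (fun z _ => h1 z), Finset.sum_ite_eq' Finset.univ y (fun z => f (Fin.cons b z))]
      simp
  rw [Finset.sum_congr rfl (fun b _ => key b), Finset.sum_add_distrib,
    Finset.sum_ite_eq Finset.univ a (fun _ => adjSum m q (fun z => f (Fin.cons a z)) y - f (Fin.cons a y))]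
  simp only [Finset.mem_univ, if_pos]
  ring

lemma adjSum_congr {n q : ℕ} {f g : (Fin n → Fin q) → ℝ} (h : ∀ y, f y = g y) (x) :
    adjSum n q f x = adjSum n q g x := by
  unfold adjSum; exact Finset.sum_congr rfl fun y _ => by rw [h y]

lemma adjSum_smul {n q : ℕ} (c : ℝ) (f : (Fin n → Fin q) → ℝ) (x) :
    adjSum n q (fun y => c * f y) x = c * adjSum n q f x := by
  unfold adjSum
  rw [Finset.mul_sum]
  exact Finset.sum_congr rfl fun y _ => by split_ifs <;> simp

lemma adjSum_finsum {n q : ℕ} {ι : Type*} (s : Finset ι) (g : ι → (Fin n → Fin q) → ℝ) (x) :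
    adjSum n q (fun y => ∑ t ∈ s, g t y) x = ∑ t ∈ s, adjSum n q (g t) x := by
  unfold adjSum
  rw [Finset.sum_comm]
  exact Finset.sum_congr rfl fun y _ => by split_ifs <;> simp

lemma adjSum_sub {n q : ℕ} (f g : (Fin n → Fin q) → ℝ) (x) :
    adjSum n q (fun y => f y - g y) x = adjSum n q f x - adjSum n q g x := by
  unfold adjSum
  rw [← Finset.sum_sub_distrib]
  exact Finset.sum_congr rfl fun y _ => by split_ifs <;> simp

lemma isEigen_smul {n q : ℕ} {lam : ℝ} (c : ℝ) {f} (hf : IsEigenfun n q lam f) :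
    IsEigenfun n q lam (fun y => c * f y) := by
  intro x; rw [adjSum_smul, hf x]; ring

lemma isEigen_finsum {n q : ℕ} {lam : ℝ} {ι : Type*} (s : Finset ι)
    {g : ι → (Fin n → Fin q) → ℝ} (hg : ∀ t ∈ s, IsEigenfun n q lam (g t)) :
    IsEigenfun n q lam (fun y => ∑ t ∈ s, g t y) := by
  intro x; rw [adjSum_finsum, Finset.mul_sum]
  exact Finset.sum_congr rfl fun t ht => hg t ht x

/-- `adjSum` expressed via coordinate updates. -/

lemma adjSum_eq_update {q : ℕ} : ∀ {m : ℕ} (h : (Fin m → Fin q) → ℝ) (x : Fin m → Fin q),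
    adjSum m q h x = (∑ i : Fin m, ∑ c : Fin q, h (Function.update x i c)) - m * h x := by
  intro m
  induction m with
  | zero =>
    intro h x
    have : ∀ y : Fin 0 → Fin q, hammingDist x y ≠ 1 := by
      intro y
      have : y = x := Subsingleton.elim _ _
      subst this; simp
    simp [adjSum, this]
  | succ m ih =>
    intro h x
    have hx : x = Fin.cons (x 0) (Fin.tail x) := (Fin.cons_self_tail x).symm
    rw [hx]
    rw [adjSum_cons, ih]
    rw [Fin.sum_univ_succ]
    have h0 : ∀ c : Fin q, Function.update (Fin.cons (x 0) (Fin.tail x) : Fin (m+1) → Fin q) 0 c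
        = Fin.cons c (Fin.tail x) := by
      intro c; rw [Fin.update_cons_zero]
    have hsucc : ∀ (i : Fin m) (c : Fin q),
        Function.update (Fin.cons (x 0) (Fin.tail x) : Fin (m+1) → Fin q) i.succ c
        = Fin.cons (x 0) (Function.update (Fin.tail x) i c) := by
      intro i c; rw [Fin.cons_update]
    simp only [h0, hsucc]
    push_cast
    ring

lemma eigen_nonpos {m q : ℕ} (hq : 0 < q) {lam : ℝ} (hl : (m:ℝ) * ((q:ℝ) - 1) < lam)
    {h : (Fin m → Fin q) → ℝ} (he : IsEigenfun m q lam h) : ∀ x, h x ≤ 0 := by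
  have : Nonempty (Fin q) := ⟨⟨0, hq⟩⟩
  obtain ⟨x₀, hx₀⟩ := Finite.exists_max h
  intro x
  refine le_trans (hx₀ x) ?_
  by_contra hpos
  push_neg at hpos
  have heq := he x₀
  rw [adjSum_eq_update] at heq
  have hb : (∑ i : Fin m, ∑ c : Fin q, h (Function.update x₀ i c)) ≤ (m : ℝ) * q * h x₀ := by
    calc (∑ i : Fin m, ∑ c : Fin q, h (Function.update x₀ i c))
        ≤ ∑ i : Fin m, ∑ c : Fin q, h x₀ := by
          refine Finset.sum_le_sum fun i _ => Finset.sum_le_sum fun c _ => hx₀ _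
      _ = (m : ℝ) * q * h x₀ := by simp [Finset.sum_const]; ring
  nlinarith [hx₀ x₀]

lemma eigen_zero {m q : ℕ} (hq : 0 < q) {lam : ℝ} (hl : (m:ℝ) * ((q:ℝ) - 1) < lam)
    {h : (Fin m → Fin q) → ℝ} (he : IsEigenfun m q lam h) : ∀ x, h x = 0 := by
  have h1 := eigen_nonpos hq hl he
  have he' : IsEigenfun m q lam (fun y => -1 * h y) := isEigen_smul (-1) he
  have h2 := eigen_nonpos hq hl he'
  intro x
  have := h2 x
  simp at this
  exact le_antisymm (h1 x) this

/-- Sum over restrictions is an eigenfunction with eigenvalue `lam - (q-1)`. -/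

lemma eigen_res_sum {m q : ℕ} {lam : ℝ} {g : (Fin (m+1) → Fin q) → ℝ}
    (he : IsEigenfun (m+1) q lam g) :
    IsEigenfun m q (lam - ((q:ℝ) - 1)) (fun y => ∑ c : Fin q, g (Fin.cons c y)) := by
  intro y
  rw [show (fun y => ∑ c : Fin q, g (Fin.cons c y)) = (fun y => ∑ c ∈ Finset.univ, (fun c y => g (Fin.cons c y)) c y) from rfl]
  rw [adjSum_finsum]
  have key : ∀ c : Fin q, adjSum m q (fun z => g (Fin.cons c z)) y
      = lam * g (Fin.cons c y) - ((∑ b : Fin q, g (Fin.cons b y)) - g (Fin.cons c y)) := by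
    intro c
    have := adjSum_cons g c y
    rw [he (Fin.cons c y)] at this
    linarith
  rw [Finset.sum_congr rfl fun c _ => key c]
  rw [Finset.sum_sub_distrib, Finset.sum_sub_distrib, ← Finset.mul_sum, Finset.sum_const]
  simp only [Finset.card_univ, Fintype.card_fin, nsmul_eq_mul]
  ring

/-- Differences of restrictions are eigenfunctions with eigenvalue `lam + 1`. -/

lemma eigen_res_diff {m q : ℕ} {lam : ℝ} {g : (Fin (m+1) → Fin q) → ℝ}
    (he : IsEigenfun (m+1) q lam g) (a b : Fin q) :
    IsEigenfun m q (lam + 1) (fun y => g (Fin.cons a y) - g (Fin.cons b y)) := by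
  intro y
  rw [adjSum_sub]
  have key : ∀ c : Fin q, adjSum m q (fun z => g (Fin.cons c z)) y
      = lam * g (Fin.cons c y) - ((∑ b : Fin q, g (Fin.cons b y)) - g (Fin.cons c y)) := by
    intro c
    have := adjSum_cons g c y
    rw [he (Fin.cons c y)] at this
    linarith
  rw [key a, key b]
  ring

lemma isEigen_congr {n q : ℕ} {lam : ℝ} {f g : (Fin n → Fin q) → ℝ} (h : ∀ y, f y = g y)
    (hf : IsEigenfun n q lam f) : IsEigenfun n q lam g := by
  have : f = g := funext h
  rwa [← this]

/-- the averaged restriction lies in `U_t(m)`. -/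

lemma memU_avg {m q t : ℕ} (hq : 0 < q) {g : (Fin (m+1) → Fin q) → ℝ}
    (hg : memU (m+1) q t g) :
    memU m q t (fun y => (q:ℝ)⁻¹ * ∑ c : Fin q, g (Fin.cons c y)) := by
  have h1 := isEigen_smul ((q:ℝ)⁻¹) (eigen_res_sum hg)
  have heq : (((m:ℕ)+1 : ℕ) : ℝ) * ((q:ℝ) - 1) - (q:ℝ) * (t:ℝ) - ((q:ℝ) - 1)
      = (m : ℝ) * ((q:ℝ) - 1) - (q:ℝ) * (t:ℝ) := by push_cast; ring
  unfold memU
  rw [← heq]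
  exact h1

/-- the centered restriction is an eigenfunction with eigenvalue `lam_t + 1`. -/

lemma eigen_centered {m q t : ℕ} (hq : 0 < q) {g : (Fin (m+1) → Fin q) → ℝ}
    (hg : memU (m+1) q t g) (a : Fin q) :
    IsEigenfun m q ((((m:ℕ)+1 : ℕ) : ℝ) * ((q:ℝ) - 1) - (q:ℝ) * (t:ℝ) + 1)
      (fun y => g (Fin.cons a y) - (q:ℝ)⁻¹ * ∑ c : Fin q, g (Fin.cons c y)) := by
  have h0 : ∀ y, (q:ℝ)⁻¹ * (∑ b ∈ Finset.univ, (fun b y => g (Fin.cons a y) - g (Fin.cons b y)) b y)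
      = g (Fin.cons a y) - (q:ℝ)⁻¹ * ∑ c : Fin q, g (Fin.cons c y) := by
    intro y
    rw [Finset.sum_sub_distrib, Finset.sum_const]
    simp only [Finset.card_univ, Fintype.card_fin, nsmul_eq_mul]
    have hqne : (q:ℝ) ≠ 0 := by positivity
    field_simp
  refine isEigen_congr h0 ?_
  exact isEigen_smul _ (isEigen_finsum _ (fun b _ => eigen_res_diff hg a b))

lemma memU_centered {m q s : ℕ} (hq : 0 < q) {g : (Fin (m+1) → Fin q) → ℝ}
    (hg : memU (m+1) q (s+1) g) (a : Fin q) :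
    memU m q s (fun y => g (Fin.cons a y) - (q:ℝ)⁻¹ * ∑ c : Fin q, g (Fin.cons c y)) := by
  have h1 := eigen_centered hq hg a
  have heq : (((m:ℕ)+1 : ℕ) : ℝ) * ((q:ℝ) - 1) - (q:ℝ) * (((s:ℕ)+1 : ℕ):ℝ) + 1
      = (m : ℝ) * ((q:ℝ) - 1) - (q:ℝ) * (s:ℝ) := by push_cast; ring
  unfold memU
  rw [← heq]
  exact h1

lemma centered_zero {m q : ℕ} (hq : 0 < q) {g : (Fin (m+1) → Fin q) → ℝ}
    (hg : memU (m+1) q 0 g) (a : Fin q) :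
    ∀ y, g (Fin.cons a y) = (q:ℝ)⁻¹ * ∑ c : Fin q, g (Fin.cons c y) := by
  have h1 := eigen_centered hq hg a
  have hq1 : (1:ℝ) ≤ (q:ℝ) := by exact_mod_cast hq
  have hl : (m:ℝ) * ((q:ℝ) - 1) < (((m:ℕ)+1 : ℕ) : ℝ) * ((q:ℝ) - 1) - (q:ℝ) * ((0:ℕ):ℝ) + 1 := by
    push_cast; nlinarith
  have := eigen_zero hq hl h1
  intro y
  have hy := this y
  linarith [hy]

lemma adjSum_add {n q : ℕ} (f g : (Fin n → Fin q) → ℝ) (x) :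
    adjSum n q (fun y => f y + g y) x = adjSum n q f x + adjSum n q g x := by
  unfold adjSum
  rw [← Finset.sum_add_distrib]
  exact Finset.sum_congr rfl fun y _ => by split_ifs <;> simp

lemma memU_add {n q t : ℕ} {f g : (Fin n → Fin q) → ℝ} (hf : memU n q t f) (hg : memU n q t g) :
    memU n q t (fun y => f y + g y) := by
  intro x; rw [adjSum_add, hf x, hg x]; ring

lemma Icc_zero_eq_range (j : ℕ) : Finset.Icc 0 j = Finset.range (j+1) := by
  ext x; simp [Nat.lt_succ_iff]

lemma memUI_res {m q j : ℕ} (hq : 0 < q) {f : (Fin (m+1) → Fin q) → ℝ}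
    (hf : memUI (m+1) q 0 j f) (a : Fin q) :
    memUI m q 0 j (fun y => f (Fin.cons a y)) := by
  obtain ⟨g, hgU, hsum⟩ := hf
  set S : ℕ → (Fin m → Fin q) → ℝ := fun t y => (q:ℝ)⁻¹ * ∑ c : Fin q, g t (Fin.cons c y) with hS
  set D : ℕ → (Fin m → Fin q) → ℝ := fun t y => g t (Fin.cons a y) - S t y with hD
  have hD0 : ∀ y, D 0 y = 0 := by
    intro y
    have := centered_zero hq (hgU 0 (by simp)) a y
    simp only [hD, hS]
    rw [this]
    ring
  refine ⟨fun s => fun y => S s y + (if s < j then D (s+1) y else 0), ?_, ?_⟩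
  · intro s hs
    rw [Finset.mem_Icc] at hs
    have hS' : memU m q s (S s) := memU_avg hq (hgU s (by simp [Finset.mem_Icc, hs.2]))
    by_cases h : s < j
    · simp only [if_pos h]
      exact memU_add hS' (memU_centered hq (hgU (s+1) (by simp [Finset.mem_Icc]; omega)) a)
    · simp only [if_neg h, add_zero]
      exact hS'
  · funext y
    rw [Finset.sum_apply]
    have h1 : f (Fin.cons a y) = ∑ t ∈ Finset.Icc 0 j, g t (Fin.cons a y) := by
      rw [hsum]; rw [Finset.sum_apply]
    rw [h1]
    have h2 : ∀ t, g t (Fin.cons a y) = S t y + D t y := by intro t; simp [hD]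
    rw [Finset.sum_congr rfl fun t _ => h2 t, Finset.sum_add_distrib]
    have h3 : ∑ t ∈ Finset.Icc 0 j, D t y = ∑ s ∈ Finset.range j, D (s+1) y := by
      rw [Icc_zero_eq_range, Finset.sum_range_succ', hD0, add_zero]
    have h4 : ∑ s ∈ Finset.Icc 0 j, (if s < j then D (s+1) y else 0)
        = ∑ s ∈ Finset.range j, D (s+1) y := by
      rw [Icc_zero_eq_range, Finset.sum_range_succ, if_neg (lt_irrefl j), add_zero]
      exact Finset.sum_congr rfl fun s hs => if_pos (Finset.mem_range.mp hs)
    rw [h3, ← h4, ← Finset.sum_add_distrib]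

lemma memUI_res_diff {m q j : ℕ} (hq : 0 < q) {f : (Fin (m+1) → Fin q) → ℝ}
    (hf : memUI (m+1) q 0 j f) (hj : 1 ≤ j) (a b : Fin q) :
    memUI m q 0 (j-1) (fun y => f (Fin.cons a y) - f (Fin.cons b y)) := by
  obtain ⟨g, hgU, hsum⟩ := hf
  set D : ℕ → (Fin m → Fin q) → ℝ :=
    fun t y => g t (Fin.cons a y) - g t (Fin.cons b y) with hD
  have hD0 : ∀ y, D 0 y = 0 := by
    intro y
    have h1 := centered_zero hq (hgU 0 (by simp)) a y
    have h2 := centered_zero hq (hgU 0 (by simp)) b y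
    simp only [hD]
    rw [h1, h2]
    ring
  refine ⟨fun s => D (s+1), ?_, ?_⟩
  · intro s hs
    rw [Finset.mem_Icc] at hs
    have hmem : s + 1 ∈ Finset.Icc 0 j := by simp [Finset.mem_Icc]; omega
    have h1 := eigen_res_diff (hgU (s+1) hmem) a b
    have heq : (((m:ℕ)+1 : ℕ) : ℝ) * ((q:ℝ) - 1) - (q:ℝ) * (((s:ℕ)+1 : ℕ):ℝ) + 1
        = (m : ℝ) * ((q:ℝ) - 1) - (q:ℝ) * (s:ℝ) := by push_cast; ring
    unfold memU
    rw [← heq]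
    exact h1
  · funext y
    rw [Finset.sum_apply]
    have h1 : ∀ (c : Fin q), f (Fin.cons c y) = ∑ t ∈ Finset.Icc 0 j, g t (Fin.cons c y) := by
      intro c; rw [hsum]; rw [Finset.sum_apply]
    rw [h1 a, h1 b, ← Finset.sum_sub_distrib]
    have : ∑ t ∈ Finset.Icc 0 j, (g t (Fin.cons a y) - g t (Fin.cons b y))
        = ∑ t ∈ Finset.Icc 0 j, D t y := rfl
    rw [this, Icc_zero_eq_range, Finset.sum_range_succ', hD0, add_zero,
      Icc_zero_eq_range]
    have : j - 1 + 1 = j := by omega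
    rw [this]

lemma memUI_zero_case {m q : ℕ} (hq : 0 < q) {f : (Fin (m+1) → Fin q) → ℝ}
    (hf : memUI (m+1) q 0 0 f) {a : Fin q} (ha : (fun y => f (Fin.cons a y)) = 0) :
    f = 0 := by
  obtain ⟨g, hgU, hsum⟩ := hf
  have hf0 : ∀ (c : Fin q) (y : Fin m → Fin q), f (Fin.cons c y) = g 0 (Fin.cons c y) := by
    intro c y
    rw [hsum]; simp
  funext x
  have hx : x = Fin.cons (x 0) (Fin.tail x) := (Fin.cons_self_tail x).symm
  rw [hx, hf0]
  have h1 := centered_zero hq (hgU 0 (by simp)) (x 0) (Fin.tail x)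
  have h2 := centered_zero hq (hgU 0 (by simp)) a (Fin.tail x)
  have ha' : f (Fin.cons a (Fin.tail x)) = 0 := by
    have := congrFun ha (Fin.tail x); simpa using this
  rw [hf0] at ha'
  simp only [Pi.zero_apply]
  rw [h1, ← h2, ha']

lemma suppCard_eq {n q : ℕ} (f : (Fin n → Fin q) → ℝ) :
    suppCard n q f = ∑ x : Fin n → Fin q, (if f x ≠ 0 then 1 else 0) := by
  classical
  rw [suppCard, Nat.card_eq_fintype_card, Fintype.card_subtype, Finset.card_filter]

lemma suppCard_pos {n q : ℕ} {f : (Fin n → Fin q) → ℝ} (hf : f ≠ 0) :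
    1 ≤ suppCard n q f := by
  classical
  obtain ⟨x, hx⟩ := Function.ne_iff.mp hf
  rw [suppCard]
  have : Nonempty {x : Fin n → Fin q // f x ≠ 0} := ⟨⟨x, hx⟩⟩
  exact Nat.one_le_iff_ne_zero.mpr (Nat.card_ne_zero.mpr ⟨this, inferInstance⟩)

lemma suppCard_succ {m q : ℕ} (f : (Fin (m+1) → Fin q) → ℝ) :
    suppCard (m+1) q f = ∑ a : Fin q, suppCard m q (fun y => f (Fin.cons a y)) := by
  classical
  rw [suppCard_eq, sum_pi_succ]
  exact Finset.sum_congr rfl fun a _ => (suppCard_eq _).symm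

lemma main_ind {q : ℕ} (hq : 3 ≤ q) :
    ∀ n j, j ≤ n → ∀ f : (Fin n → Fin q) → ℝ, f ≠ 0 → memUI n q 0 j f →
      q ^ (n - j) ≤ suppCard n q f := by
  have hq0 : 0 < q := by omega
  intro n
  induction n with
  | zero =>
    intro j hj f hf _
    interval_cases j
    simpa using suppCard_pos hf
  | succ m ih =>
    intro j hj f hf hmem
    by_cases hjm : j = m + 1
    · subst hjm
      simpa [Nat.sub_self] using suppCard_pos hf
    have hjle : j ≤ m := by omega
    by_cases hall : ∀ a : Fin q, (fun y => f (Fin.cons a y)) ≠ 0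
    · -- all restrictions nonzero
      have hlow : ∀ a : Fin q, q ^ (m - j) ≤ suppCard m q (fun y => f (Fin.cons a y)) :=
        fun a => ih j hjle _ (hall a) (memUI_res hq0 hmem a)
      have hsum := suppCard_succ f
      have hpow : m + 1 - j = (m - j) + 1 := by omega
      calc q ^ (m + 1 - j) = q * q ^ (m - j) := by rw [hpow]; ring
        _ ≤ ∑ a : Fin q, suppCard m q (fun y => f (Fin.cons a y)) := by
            calc q * q ^ (m - j) = ∑ _a : Fin q, q ^ (m - j) := by
                  simp [Finset.sum_const, Finset.card_univ]
              _ ≤ _ := Finset.sum_le_sum fun a _ => hlow a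
        _ = suppCard (m+1) q f := hsum.symm
    · push_neg at hall
      obtain ⟨a, ha⟩ := hall
      have hb : ∃ b : Fin q, (fun y => f (Fin.cons b y)) ≠ 0 := by
        by_contra hcon
        push_neg at hcon
        apply hf
        funext x
        have hx : x = Fin.cons (x 0) (Fin.tail x) := (Fin.cons_self_tail x).symm
        rw [hx]
        have := congrFun (hcon (x 0)) (Fin.tail x)
        simpa using this
      obtain ⟨b, hbne⟩ := hb
      rcases Nat.eq_zero_or_pos j with hj0 | hj1
      · exfalso
        subst hj0
        exact hbne (by
          have := memUI_zero_case hq0 hmem ha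
          funext y
          rw [this]
          rfl)
      · have hzero : ∀ y, f (Fin.cons a y) = 0 := fun y => by
          have := congrFun ha y; simpa using this
        have hdmem : memUI m q 0 (j-1) (fun y => f (Fin.cons b y) - f (Fin.cons a y)) :=
          memUI_res_diff hq0 hmem hj1 b a
        have hfun : (fun y => f (Fin.cons b y) - f (Fin.cons a y))
            = (fun y => f (Fin.cons b y)) := by
          funext y; rw [hzero y, sub_zero]
        rw [hfun] at hdmem
        have hlow := ih (j-1) (by omega) _ hbne hdmem
        have hexp : m - (j - 1) = m + 1 - j := by omega
        rw [hexp] at hlow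
        refine le_trans hlow ?_
        rw [suppCard_succ]
        exact Finset.single_le_sum (f := fun a => suppCard m q (fun y => f (Fin.cons a y)))
          (fun a _ => Nat.zero_le _) (Finset.mem_univ b)

/-- a nonzero f ∈ U_{[0,j]}(n,q), q ≥ 3, j ≤ n, has support
of cardinality at least q^{n-j}. -/
theorem min_support_U0j (n q j : ℕ) (hq : 3 ≤ q) (hj : j ≤ n)
    (f : (Fin n → Fin q) → ℝ) (hf : f ≠ 0) (hmem : memUI n q 0 j f) :
    q ^ (n - j) ≤ suppCard n q f :=
  main_ind hq n j hj f hf hmem
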